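/- Let Q_{i−1}, Q_i, Q_{i+1}, Q̂ be real numbers with Q_{i−1} < Q_i, and let α = 2. Define the limiter value φ = max(0, min(α, α(Q_{i+1} − Q_i)/(Q_i − Q_{i−1}), 2(Q̂ − Q_i)/(Q_i − Q_{i−1}))) and the slope-limited interface value Q* = Q_i + 0.5·(Q_i − Q_{i−1})·φ. Then Q_i ≤ Q* and Q* ≤ max(Q_i, min(2Q_i − Q_{i−1}, Q_{i+1}, Q̂)). In particular, if both Q_{i+1} ≥ Q_i and Q̂ ≥ Q_i, then Q_i ≤ Q* ≤ min(2Q_i − Q_{i−1}, Q_{i+1}, Q̂), and if either Q_{i+1} < Q_i or Q̂ < Q_i then Q* = Q_i. -/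
import Mathlib


/-- Bounds satisfied by the TVD slope limiter used with the WENO scheme:
with `α = 2`, `φ = max(0, min(α, α(Q_{i+1}-Q_i)/(Q_i-Q_{i-1}), 2(Q̂-Q_i)/(Q_i-Q_{i-1})))`
and `Q* = Q_i + 0.5 (Q_i - Q_{i-1}) φ`, the limited value `Q*` satisfies
`Q_i ≤ Q* ≤ max(Q_i, min(2Q_i - Q_{i-1}, Q_{i+1}, Q̂))`; if both `Q_{i+1} ≥ Q_i`
and `Q̂ ≥ Q_i` then `Q_i ≤ Q* ≤ min(2Q_i - Q_{i-1}, Q_{i+1}, Q̂)`, and if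
`Q_{i+1} < Q_i` or `Q̂ < Q_i` then `Q* = Q_i`. -/
theorem tvd_limiter_bounds
    (Qm1 Q0 Qp1 Qhat : ℝ) (hlt : Qm1 < Q0) (α : ℝ) (hα : α = 2)
    (φ Qstar : ℝ)
    (hφ : φ = max 0 (min α (min (α * (Qp1 - Q0) / (Q0 - Qm1))
        (2 * (Qhat - Q0) / (Q0 - Qm1)))))
    (hQstar : Qstar = Q0 + 0.5 * (Q0 - Qm1) * φ) :
    Q0 ≤ Qstar
      ∧ Qstar ≤ max Q0 (min (2 * Q0 - Qm1) (min Qp1 Qhat))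
      ∧ (Q0 ≤ Qp1 → Q0 ≤ Qhat →
          Q0 ≤ Qstar ∧ Qstar ≤ min (2 * Q0 - Qm1) (min Qp1 Qhat))
      ∧ (Qp1 < Q0 ∨ Qhat < Q0 → Qstar = Q0) := by
  subst hα
  have hd : 0 < Q0 - Qm1 := by linarith
  have hdne : Q0 - Qm1 ≠ 0 := ne_of_gt hd
  set a := 2 * (Qp1 - Q0) / (Q0 - Qm1) with ha
  set b := 2 * (Qhat - Q0) / (Q0 - Qm1) with hb
  have haQ : (Q0 - Qm1) * a = 2 * (Qp1 - Q0) := by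
    rw [ha]; field_simp
  have hbQ : (Q0 - Qm1) * b = 2 * (Qhat - Q0) := by
    rw [hb]; field_simp
  set m := min 2 (min a b) with hm
  rcases le_total m 0 with hm0 | hm0
  · have hφ0 : φ = 0 := by rw [hφ]; exact max_eq_left hm0
    have hQs : Qstar = Q0 := by rw [hQstar, hφ0]; ring
    refine ⟨hQs.ge, hQs.le.trans (le_max_left _ _), ?_, fun _ => hQs⟩
    intro h1 h2
    have h2Q : Q0 ≤ 2 * Q0 - Qm1 := by linarith
    exact ⟨hQs.ge, hQs.le.trans (le_min h2Q (le_min h1 h2))⟩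
  · have hφm : φ = m := by rw [hφ]; exact max_eq_right hm0
    have hφ2 : φ ≤ 2 := hφm ▸ min_le_left _ _
    have hφa : φ ≤ a := hφm ▸ le_trans (min_le_right _ _) (min_le_left _ _)
    have hφb : φ ≤ b := hφm ▸ le_trans (min_le_right _ _) (min_le_right _ _)
    have hφ0 : 0 ≤ φ := hφm ▸ hm0
    have h1 : Q0 ≤ Qstar := by rw [hQstar]; nlinarith
    have hu1 : Qstar ≤ 2 * Q0 - Qm1 := by rw [hQstar]; nlinarith
    have hu2 : Qstar ≤ Qp1 := by rw [hQstar]; nlinarith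
    have hu3 : Qstar ≤ Qhat := by rw [hQstar]; nlinarith
    have hmin : Qstar ≤ min (2 * Q0 - Qm1) (min Qp1 Qhat) :=
      le_min hu1 (le_min hu2 hu3)
    refine ⟨h1, le_max_of_le_right hmin, fun _ _ => ⟨h1, hmin⟩, ?_⟩
    rintro (h | h)
    · have : a < 0 := by
        by_contra hc; push_neg at hc; nlinarith
      linarith
    · have : b < 0 := by
        by_contra hc; push_neg at hc; nlinarith
      linarith
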